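/- Let p be an odd prime, K an algebraically closed field of characteristic p, and c a nonzero element of K. Let F be the field of fractions of K[X,Y]/((X^p − X)(Y^p − Y) − c), with x, y the images of X, Y. Then there exist K-automorphisms α and β of the field F determined by α(x) = x + 1, α(y) = y and β(x) = x, β(y) = y + 1; they satisfy α^p = id, β^p = id, α∘β = β∘α, α ≠ id, β ≠ id, and the subgroup of the K-automorphism group of F generated by α and β is an elementary abelian group of order p². -/

import Mathlib

open MvPolynomial

set_option synthInstance.maxHeartbeats 1000000
set_option maxHeartbeats 1000000

/-- The polynomial `(X^p - X)(Y^p - Y) - c` defining the Artin–Mumford curve. -/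
noncomputable def amPoly (p : ℕ) (K : Type*) [Field K] (c : K) : MvPolynomial (Fin 2) K :=
  (X 0 ^ p - X 0) * (X 1 ^ p - X 1) - C c

/-- The coordinate ring `K[X,Y]/((X^p - X)(Y^p - Y) - c)` of the Artin–Mumford curve. -/
abbrev amRing (p : ℕ) (K : Type*) [Field K] (c : K) : Type _ :=
  MvPolynomial (Fin 2) K ⧸ Ideal.span {amPoly p K c}

/-!
Translating the coordinates by a vector `u ∈ 𝔽_p²` fixes `X^p - X` and `Y^p - Y`, because
`a^p = a` on `𝔽_p`, hence fixes the defining polynomial of the curve. Such a translation therefore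
descends to the coordinate ring and extends to the function field, which gives a homomorphism
`𝔽_p² →* Aut_K(F)`. It is injective since it moves `(x, y)` to `(x, y) + u`, and `α`, `β` are the
images of the standard basis vectors, so they generate a copy of `𝔽_p²`.
-/

namespace MvPolynomial

variable {σ R : Type*} [CommRing R]

noncomputable def translateHom :
    Multiplicative (σ → R) →* (MvPolynomial σ R →ₐ[R] MvPolynomial σ R) where
  toFun t := aeval fun i => X i + C (t.toAdd i)
  map_one' := algHom_ext fun i => by simp
  map_mul' s t := algHom_ext fun i => by
    rw [AlgHom.mul_apply]
    simp only [toAdd_mul, Pi.add_apply, aeval_X, map_add, aeval_C, algebraMap_eq]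
    ring

noncomputable def translate :
    Multiplicative (σ → R) →* (MvPolynomial σ R ≃ₐ[R] MvPolynomial σ R) :=
  (AlgEquiv.algHomUnitsEquiv _ _).toMonoidHom.comp translateHom.toHomUnits

@[simp]
lemma translate_X (t : Multiplicative (σ → R)) (i : σ) :
    translate t (X i) = X i + C (t.toAdd i) :=
  aeval_X _ i

@[simp]
lemma translate_C (t : Multiplicative (σ → R)) (r : R) : translate t (C r) = C r :=
  (translate t).commutes r

lemma translate_X_pow_char_sub_X (p : ℕ) [Fact p.Prime] [CharP R p]
    (t : Multiplicative (σ → R)) (i : σ) (ht : t.toAdd i ^ p = t.toAdd i) :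
    translate t (X i ^ p - X i) = X i ^ p - X i := by
  rw [map_sub, map_pow, translate_X, add_pow_char, ← C_pow, ht]
  ring

end MvPolynomial

namespace Ideal

variable {R A G : Type*} [CommSemiring R] [CommRing A] [Algebra R A] [Group G]

def quotientAlgEquivHom (I : Ideal A) (φ : G →* (A ≃ₐ[R] A)) (hI : ∀ g, I.map (φ g) = I) :
    G →* ((A ⧸ I) ≃ₐ[R] (A ⧸ I)) where
  toFun g := quotientEquivAlg I I (φ g) (hI g).symm
  map_one' := by
    ext x
    obtain ⟨a, rfl⟩ := Quotient.mk_surjective x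
    simp
  map_mul' g h := by
    ext x
    obtain ⟨a, rfl⟩ := Quotient.mk_surjective x
    simp only [quotientEquivAlg_mk, map_mul, AlgEquiv.mul_apply]
    rfl

@[simp]
lemma quotientAlgEquivHom_mk (I : Ideal A) (φ : G →* (A ≃ₐ[R] A)) (hI : ∀ g, I.map (φ g) = I)
    (g : G) (a : A) : quotientAlgEquivHom I φ hI g (Quotient.mk I a) = Quotient.mk I (φ g a) :=
  rfl

end Ideal

lemma Subgroup.closure_ofAdd_pi_single_one_eq_top {ι : Type*} [Fintype ι] [DecidableEq ι]
    (n : ℕ) [NeZero n] :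
    closure (Set.range fun i : ι => Multiplicative.ofAdd (Pi.single i (1 : ZMod n))) = ⊤ := by
  refine eq_top_iff.2 fun u _ => ?_
  have hu : u = ∏ i, (Multiplicative.ofAdd (Pi.single i (1 : ZMod n))) ^ (u.toAdd i).val := by
    apply Multiplicative.toAdd.injective
    ext j
    simp [Finset.sum_apply, Pi.single_apply, -nsmul_eq_mul]
  rw [hu]
  exact prod_mem fun i _ => pow_mem (subset_closure (Set.mem_range_self i)) _

section ArtinMumford

variable (p : ℕ) [Fact p.Prime] (K : Type*) [Field K] [CharP K p] (c : K)

noncomputable def amTranslate :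
    Multiplicative (Fin 2 → ZMod p) →* (MvPolynomial (Fin 2) K ≃ₐ[K] MvPolynomial (Fin 2) K) :=
  translate.comp
    ((ZMod.castHom dvd_rfl K : ZMod p →+* K).toAddMonoidHom.compLeft (Fin 2)).toMultiplicative

@[simp]
lemma amTranslate_X (u : Multiplicative (Fin 2 → ZMod p)) (i : Fin 2) :
    amTranslate p K u (X i) = X i + C (ZMod.castHom dvd_rfl K (u.toAdd i)) := by
  rw [amTranslate, MonoidHom.comp_apply, translate_X]
  rfl

lemma amTranslate_amPoly (u : Multiplicative (Fin 2 → ZMod p)) :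
    amTranslate p K u (amPoly p K c) = amPoly p K c := by
  have h : ∀ i, ZMod.castHom dvd_rfl K (u.toAdd i) ^ p = ZMod.castHom dvd_rfl K (u.toAdd i) :=
    fun i => by rw [← map_pow, ZMod.pow_card]
  rw [amPoly, map_sub, map_mul, amTranslate, MonoidHom.comp_apply,
    translate_X_pow_char_sub_X p _ 0 (h 0), translate_X_pow_char_sub_X p _ 1 (h 1), translate_C]

lemma map_span_amPoly_amTranslate (u : Multiplicative (Fin 2 → ZMod p)) :
    (Ideal.span {amPoly p K c}).map (amTranslate p K u) = Ideal.span {amPoly p K c} := by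
  rw [Ideal.map_span, Set.image_singleton, amTranslate_amPoly]

variable [IsDomain (amRing p K c)]

noncomputable def amTranslation :
    Multiplicative (Fin 2 → ZMod p) →*
      (FractionRing (amRing p K c) ≃ₐ[K] FractionRing (amRing p K c)) :=
  (IsFractionRing.fieldEquivOfAlgEquivHom K _).comp
    ((Ideal.span {amPoly p K c}).quotientAlgEquivHom (amTranslate p K)
      (map_span_amPoly_amTranslate p K c))

lemma amTranslation_algebraMap_mk_X (u : Multiplicative (Fin 2 → ZMod p)) (i : Fin 2) :
    amTranslation p K c u (algebraMap (amRing p K c) _ (Ideal.Quotient.mk _ (X i))) =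
      algebraMap (amRing p K c) _ (Ideal.Quotient.mk _ (X i)) +
        algebraMap K _ (ZMod.castHom dvd_rfl K (u.toAdd i)) := by
  rw [amTranslation, MonoidHom.comp_apply, IsFractionRing.fieldEquivOfAlgEquivHom_apply,
    IsFractionRing.fieldEquivOfAlgEquiv_algebraMap, Ideal.quotientAlgEquivHom_mk, amTranslate_X,
    ← algebraMap_eq, map_add, map_add, Ideal.Quotient.mk_algebraMap,
    ← IsScalarTower.algebraMap_apply]

lemma amTranslation_injective : Function.Injective (amTranslation p K c) := by
  refine (injective_iff_map_eq_one _).2 fun u hu => ?_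
  ext i
  have hi := amTranslation_algebraMap_mk_X p K c u i
  rw [hu, AlgEquiv.one_apply, left_eq_add, map_eq_zero_iff _ (algebraMap K _).injective,
    map_eq_zero_iff _ (ZMod.castHom dvd_rfl K).injective] at hi
  exact hi

end ArtinMumford

theorem am_elementary_abelian_translations_general (p : ℕ) (hp : p.Prime)
    (K : Type*) [Field K] [CharP K p] (c : K)
    [IsDomain (amRing p K c)]
    (x y : FractionRing (amRing p K c))
    (hx : x = algebraMap (amRing p K c) (FractionRing (amRing p K c))
        (Ideal.Quotient.mk (Ideal.span {amPoly p K c}) (X 0)))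
    (hy : y = algebraMap (amRing p K c) (FractionRing (amRing p K c))
        (Ideal.Quotient.mk (Ideal.span {amPoly p K c}) (X 1))) :
    ∃ α β : FractionRing (amRing p K c) ≃ₐ[K] FractionRing (amRing p K c),
      α x = x + 1 ∧ α y = y ∧ β x = x ∧ β y = y + 1 ∧
      α ^ p = 1 ∧ β ^ p = 1 ∧ α * β = β * α ∧ α ≠ 1 ∧ β ≠ 1 ∧
      Nat.card (Subgroup.closure
        ({α, β} : Set (FractionRing (amRing p K c) ≃ₐ[K] FractionRing (amRing p K c)))) = p ^ 2 ∧
      (∀ σ ∈ Subgroup.closure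
          ({α, β} : Set (FractionRing (amRing p K c) ≃ₐ[K] FractionRing (amRing p K c))),
        σ ^ p = 1) ∧
      (∀ σ ∈ Subgroup.closure
          ({α, β} : Set (FractionRing (amRing p K c) ≃ₐ[K] FractionRing (amRing p K c))),
        ∀ τ ∈ Subgroup.closure
          ({α, β} : Set (FractionRing (amRing p K c) ≃ₐ[K] FractionRing (amRing p K c))),
        σ * τ = τ * σ) := by
  have := Fact.mk hp
  set T := amTranslation p K c
  set e : Fin 2 → Multiplicative (Fin 2 → ZMod p) := fun i => .ofAdd (Pi.single i 1)
  have hclosure : Subgroup.closure {T (e 0), T (e 1)} = T.range := by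
    rw [MonoidHom.range_eq_map, ← Subgroup.closure_ofAdd_pi_single_one_eq_top,
      MonoidHom.map_closure, ← Set.range_comp]
    congr 1
    ext
    simp [Fin.exists_fin_two, eq_comm, e]
  have hpow : ∀ σ ∈ T.range, σ ^ p = 1 := by
    rintro _ ⟨u, rfl⟩
    rw [← map_pow, ← ofAdd_toAdd u, ← ofAdd_nsmul]
    simp
  have hcomm : ∀ σ ∈ T.range, ∀ τ ∈ T.range, σ * τ = τ * σ := by
    rintro _ ⟨u, rfl⟩ _ ⟨v, rfl⟩
    rw [← map_mul, ← map_mul, mul_comm]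
  have he : ∀ i, T (e i) ∈ T.range := fun i => ⟨e i, rfl⟩
  have hT := amTranslation_injective p K c
  refine ⟨T (e 0), T (e 1), ?_, ?_, ?_, ?_, hpow _ (he 0), hpow _ (he 1), hcomm _ (he 0) _ (he 1),
    (map_ne_one_iff T hT).2 (by simp [e]), (map_ne_one_iff T hT).2 (by simp [e]), ?_, ?_, ?_⟩
  iterate 4 simp [hx, hy, T, amTranslation_algebraMap_mk_X, e]
  all_goals rw [hclosure]
  · rw [← Nat.card_congr (MonoidHom.ofInjective hT).toEquiv]
    simp
  · exact hpow
  · exact hcomm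

/-- The function field `F` of the Artin–Mumford curve has `K`-automorphisms `α, β` with
`α(x) = x+1`, `α(y) = y`, `β(x) = x`, `β(y) = y+1`; they are non-trivial, commute, have order
dividing `p`, and generate an elementary abelian group of order `p²`. -/
theorem am_elementary_abelian_translations (p : ℕ) (hp : p.Prime) (hodd : Odd p)
    (K : Type*) [Field K] [IsAlgClosed K] [CharP K p] (c : K) (hc : c ≠ 0)
    [IsDomain (amRing p K c)]
    (x y : FractionRing (amRing p K c))
    (hx : x = algebraMap (amRing p K c) (FractionRing (amRing p K c))
        (Ideal.Quotient.mk (Ideal.span {amPoly p K c}) (X 0)))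
    (hy : y = algebraMap (amRing p K c) (FractionRing (amRing p K c))
        (Ideal.Quotient.mk (Ideal.span {amPoly p K c}) (X 1))) :
    ∃ α β : FractionRing (amRing p K c) ≃ₐ[K] FractionRing (amRing p K c),
      α x = x + 1 ∧ α y = y ∧ β x = x ∧ β y = y + 1 ∧
      α ^ p = 1 ∧ β ^ p = 1 ∧ α * β = β * α ∧ α ≠ 1 ∧ β ≠ 1 ∧
      Nat.card (Subgroup.closure
        ({α, β} : Set (FractionRing (amRing p K c) ≃ₐ[K] FractionRing (amRing p K c)))) = p ^ 2 ∧
      (∀ σ ∈ Subgroup.closure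
          ({α, β} : Set (FractionRing (amRing p K c) ≃ₐ[K] FractionRing (amRing p K c))),
        σ ^ p = 1) ∧
      (∀ σ ∈ Subgroup.closure
          ({α, β} : Set (FractionRing (amRing p K c) ≃ₐ[K] FractionRing (amRing p K c))),
        ∀ τ ∈ Subgroup.closure
          ({α, β} : Set (FractionRing (amRing p K c) ≃ₐ[K] FractionRing (amRing p K c))),
        σ * τ = τ * σ) :=
  am_elementary_abelian_translations_general p hp K c x y hx hy
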